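/- Let A be an m×n matrix with rational entries, b ∈ ℚ^m, and x ∈ ℝ^n with Ax = b. For every ε > 0 there exist rational solutions x₁, …, x_k ∈ ℚ^n of Ax_t = b with ‖x_t − x‖_∞ < ε for each t, and positive reals γ₁, …, γ_k with Σ γ_t = 1 and x = Σ γ_t x_t. -/
import Mathlib
set_option maxHeartbeats 1000000

theorem exists_genInv {m n : ℕ} (A : Matrix (Fin m) (Fin n) ℚ) :
    ∃ B : Matrix (Fin n) (Fin m) ℚ, A * B * A = A := by
  classical
  set f : (Fin n → ℚ) →ₗ[ℚ] (Fin m → ℚ) := Matrix.toLin' A with hf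
  obtain ⟨p, hp⟩ := (LinearMap.range f).exists_isCompl
  obtain ⟨s, hs⟩ := f.rangeRestrict.exists_rightInverse_of_surjective
    (LinearMap.range_rangeRestrict _)
  set g : (Fin m → ℚ) →ₗ[ℚ] (Fin n → ℚ) :=
    s ∘ₗ ((LinearMap.range f).linearProjOfIsCompl p hp) with hg
  refine ⟨LinearMap.toMatrix' g, ?_⟩
  apply Matrix.toLin'.injective
  rw [Matrix.toLin'_mul, Matrix.toLin'_mul, Matrix.toLin'_toMatrix']
  refine LinearMap.ext fun v => ?_
  have h1 : ((LinearMap.range f).linearProjOfIsCompl p hp) (f v) = ⟨f v, LinearMap.mem_range_self f v⟩ :=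
    Submodule.linearProjOfIsCompl_apply_left hp ⟨f v, LinearMap.mem_range_self f v⟩
  have h2 : ∀ y : LinearMap.range f, f (s y) = (y : Fin m → ℚ) := by
    intro y
    simpa [LinearMap.rangeRestrict] using congrArg Subtype.val (LinearMap.congr_fun hs y)
  simp only [LinearMap.comp_apply, LinearMap.coe_comp, Function.comp_apply, hg]
  rw [h1, h2]

/-- casting `mulVec` componentwise -/
lemma cast_mulVec {a b : ℕ} (M : Matrix (Fin a) (Fin b) ℚ) (v : Fin b → ℚ) (i : Fin a) :
    ((M.mulVec v i : ℚ) : ℝ)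
      = (M.map (fun q : ℚ => (q : ℝ))).mulVec (fun j => (v j : ℝ)) i := by
  simp [Matrix.mulVec, dotProduct, Matrix.map_apply]

lemma cast_map_mul {a b c : ℕ} (M : Matrix (Fin a) (Fin b) ℚ) (N : Matrix (Fin b) (Fin c) ℚ) :
    (M * N).map (fun q : ℚ => (q : ℝ))
      = M.map (fun q : ℚ => (q : ℝ)) * N.map (fun q : ℚ => (q : ℝ)) := by
  ext i j
  simp [Matrix.mul_apply, Matrix.map_apply]

lemma cast_map_one {a : ℕ} :
    (1 : Matrix (Fin a) (Fin a) ℚ).map (fun q : ℚ => (q : ℝ)) = 1 := by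
  ext i j
  simp [Matrix.map_apply, Matrix.one_apply, apply_ite (fun q : ℚ => (q : ℝ))]

lemma cast_map_sub {a c : ℕ} (M N : Matrix (Fin a) (Fin c) ℚ) :
    (M - N).map (fun q : ℚ => (q : ℝ))
      = M.map (fun q : ℚ => (q : ℝ)) - N.map (fun q : ℚ => (q : ℝ)) := by
  ext i j
  simp [Matrix.map_apply]

/-- Every real solution of a rational linear system `A x = b` is a convex
combination of rational solutions lying within `ε` of it in the sup norm. -/
theorem rational_convex_decomposition_of_linear_system_close
    (m n : ℕ) (A : Matrix (Fin m) (Fin n) ℚ) (b : Fin m → ℚ) (x : Fin n → ℝ)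
    (hx : (A.map (fun q : ℚ => (q : ℝ))).mulVec x = fun i => (b i : ℝ))
    (ε : ℝ) (hε : 0 < ε) :
    ∃ (k : ℕ) (_ : 0 < k) (xs : Fin k → (Fin n → ℚ)) (γ : Fin k → ℝ),
      (∀ t, A.mulVec (xs t) = b) ∧
      (∀ t, ‖(fun j => (xs t j : ℝ)) - x‖ < ε) ∧
      (∀ t, 0 < γ t) ∧
      (∑ t, γ t) = 1 ∧
      (∀ j, x j = ∑ t, γ t * (xs t j : ℝ)) := by
  classical
  obtain ⟨B, hB⟩ := exists_genInv A
  set P : Matrix (Fin n) (Fin n) ℚ := 1 - B * A with hPdef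
  have hAP : A * P = 0 := by
    rw [hPdef, Matrix.mul_sub, Matrix.mul_one, ← Matrix.mul_assoc, hB, sub_self]
  set A' := A.map (fun q : ℚ => (q : ℝ)) with hA'
  set B' := B.map (fun q : ℚ => (q : ℝ)) with hB'
  set P' := P.map (fun q : ℚ => (q : ℝ)) with hP'
  have hABA' : A' * B' * A' = A' := by
    rw [hA', hB', ← cast_map_mul, ← cast_map_mul, hB]
  have hAP' : A' * P' = 0 := by
    rw [hA', hP', ← cast_map_mul, hAP]
    exact Matrix.map_zero _ (by norm_num)
  have hP'eq : P' = 1 - B' * A' := by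
    rw [hP', hPdef, cast_map_sub, cast_map_one, cast_map_mul, hB', hA']
  -- rational particular solution
  set x₀ : Fin n → ℚ := B.mulVec b with hx₀def
  have hx₀R : A'.mulVec (fun j => (x₀ j : ℝ)) = fun i => (b i : ℝ) := by
    have h1 : (fun j => (x₀ j : ℝ)) = B'.mulVec (fun i => (b i : ℝ)) := by
      funext j; exact cast_mulVec B b j
    rw [h1, Matrix.mulVec_mulVec, ← hx, Matrix.mulVec_mulVec, hABA', hx]
  have hx₀ : A.mulVec x₀ = b := by
    funext i
    have := congrFun hx₀R i
    rw [← cast_mulVec] at this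
    exact_mod_cast this
  -- the kernel part
  set u : Fin n → ℝ := x - (fun j => (x₀ j : ℝ)) with hu
  have hxu : ∀ j, x j = (x₀ j : ℝ) + u j := by intro j; simp [hu]
  have hAu : A'.mulVec u = 0 := by
    rw [hu, Matrix.mulVec_sub, hx, hx₀R, sub_self]
  have hPu : P'.mulVec u = u := by
    rw [hP'eq, Matrix.sub_mulVec, Matrix.one_mulVec, ← Matrix.mulVec_mulVec, hAu,
      Matrix.mulVec_zero, sub_zero]
  -- constants
  set C : ℝ := (∑ i, ∑ j, |(P i j : ℝ)|) + 1 with hCdef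
  have hC1 : 1 ≤ C := by
    have : (0:ℝ) ≤ ∑ i, ∑ j, |(P i j : ℝ)| :=
      Finset.sum_nonneg fun i _ => Finset.sum_nonneg fun j _ => abs_nonneg _
    linarith
  have hC : 0 < C := by linarith
  set δ : ℝ := ε / C with hδdef
  have hδ : 0 < δ := div_pos hε hC
  have hCδ : C * δ = ε := by rw [hδdef]; field_simp
  have hrow : ∀ i, (∑ j, |P' i j|) ≤ C - 1 := by
    intro i
    have : (∑ j, |P' i j|) ≤ ∑ i', ∑ j, |P' i' j| :=
      Finset.single_le_sum (f := fun i' => ∑ j, |P' i' j|)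
        (fun i' _ => Finset.sum_nonneg fun j _ => abs_nonneg _) (Finset.mem_univ i)
    simpa [hCdef, hP', Matrix.map_apply] using this
  -- rational approximations of u
  have hav : ∀ j, ∃ a : ℚ, u j - δ < (a : ℝ) ∧ (a : ℝ) < u j :=
    fun j => exists_rat_btwn (by linarith)
  have hbv : ∀ j, ∃ c : ℚ, u j < (c : ℝ) ∧ (c : ℝ) < u j + δ :=
    fun j => exists_rat_btwn (by linarith)
  choose av hav1 hav2 using hav
  choose bv hbv1 hbv2 using hbv
  have hd : ∀ j, (0:ℝ) < (bv j : ℝ) - (av j : ℝ) := fun j => by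
    have := hav2 j; have := hbv1 j; linarith
  set t : Fin n → ℝ := fun j => ((bv j : ℝ) - u j) / ((bv j : ℝ) - (av j : ℝ)) with htdef
  have ht0 : ∀ j, 0 < t j := fun j => div_pos (by have := hbv1 j; linarith) (hd j)
  have ht1 : ∀ j, t j < 1 := fun j => (div_lt_one (hd j)).2 (by have := hav2 j; linarith)
  have hcomb : ∀ j, t j * (av j : ℝ) + (1 - t j) * (bv j : ℝ) = u j := by
    intro j
    have h : t j * ((bv j : ℝ) - (av j : ℝ)) = (bv j : ℝ) - u j :=
      div_mul_cancel₀ _ (hd j).ne'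
    nlinarith [h]
  -- corner weights
  set g : Fin n → Bool → ℝ := fun j s => if s then t j else 1 - t j with hgdef
  set q : Fin n → Bool → ℚ := fun j s => if s then av j else bv j with hqdef
  have hgpos : ∀ j s, 0 < g j s := by
    intro j s
    cases s
    · have h1 := ht1 j
      simp only [hgdef]
      norm_num
      linarith
    · have h0 := ht0 j
      simp only [hgdef]
      norm_num
      linarith
  have hg1 : ∀ j, (∑ s : Bool, g j s) = 1 := by
    intro j; rw [Fintype.sum_bool]; simp [hgdef]
  have hgq : ∀ j, (∑ s : Bool, g j s * ((q j s : ℚ) : ℝ)) = u j := by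
    intro j; rw [Fintype.sum_bool]; simpa [hgdef, hqdef] using hcomb j
  have hqnear : ∀ j s, |((q j s : ℚ) : ℝ) - u j| ≤ δ := by
    intro j s
    cases s <;> simp only [hqdef] <;> rw [abs_le] <;> constructor
    · have := hbv1 j; simp; linarith
    · have := hbv2 j; simp; linarith
    · have := hav1 j; simp; linarith
    · have := hav2 j; simp; linarith
  set Γ : (Fin n → Bool) → ℝ := fun S => ∏ j, g j (S j) with hΓdef
  set XS : (Fin n → Bool) → (Fin n → ℚ) :=
    fun S => x₀ + P.mulVec (fun j => q j (S j)) with hXSdef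
  have hΓpos : ∀ S, 0 < Γ S := fun S => Finset.prod_pos fun j _ => hgpos j (S j)
  have hΓsum : (∑ S : Fin n → Bool, Γ S) = 1 := by
    rw [hΓdef, ← Fintype.prod_sum g]
    exact Finset.prod_eq_one fun j _ => hg1 j
  have hΓq : ∀ j, (∑ S : Fin n → Bool, Γ S * ((q j (S j) : ℚ) : ℝ)) = u j := by
    intro j
    set G : Fin n → Bool → ℝ := fun l s => if l = j then g l s * ((q l s : ℚ) : ℝ) else g l s with hGdef
    have step1 : ∀ S : Fin n → Bool, Γ S * ((q j (S j) : ℚ) : ℝ) = ∏ l, G l (S l) := by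
      intro S
      have : ∀ l, G l (S l) = g l (S l) * (if l = j then ((q l (S l) : ℚ) : ℝ) else 1) := by
        intro l; by_cases h : l = j <;> simp [hGdef, h]
      calc Γ S * ((q j (S j) : ℚ) : ℝ)
          = (∏ l, g l (S l)) * ∏ l, (if l = j then ((q l (S l) : ℚ) : ℝ) else 1) := by
            rw [Finset.prod_ite_eq' Finset.univ j (fun l => ((q l (S l) : ℚ) : ℝ))]
            simp [hΓdef]
        _ = ∏ l, G l (S l) := by rw [← Finset.prod_mul_distrib]; exact Finset.prod_congr rfl fun l _ => (this l).symm
    have hGsum : ∀ l, (∑ s : Bool, G l s) = if l = j then u j else 1 := by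
      intro l
      by_cases h : l = j
      · subst h; simp only [hGdef, if_pos rfl]; exact hgq l
      · simp only [hGdef, if_neg h]; exact hg1 l
    calc (∑ S : Fin n → Bool, Γ S * ((q j (S j) : ℚ) : ℝ))
        = ∑ S : Fin n → Bool, ∏ l, G l (S l) := Finset.sum_congr rfl fun S _ => step1 S
      _ = ∏ l, ∑ s : Bool, G l s := (Fintype.prod_sum G).symm
      _ = ∏ l, (if l = j then u j else 1) := Finset.prod_congr rfl fun l _ => hGsum l
      _ = u j := by rw [Finset.prod_ite_eq' Finset.univ j (fun _ => u j)]; simp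
  have hXSsol : ∀ S, A.mulVec (XS S) = b := by
    intro S
    rw [hXSdef]
    simp only [Matrix.mulVec_add, Matrix.mulVec_mulVec, hAP, hx₀, Matrix.zero_mulVec, add_zero]
  have hXScast : ∀ S i, ((XS S i : ℚ) : ℝ)
      = (x₀ i : ℝ) + (P'.mulVec (fun j => ((q j (S j) : ℚ) : ℝ))) i := by
    intro S i
    have : ((P.mulVec (fun j => q j (S j)) i : ℚ) : ℝ)
        = (P'.mulVec (fun j => ((q j (S j) : ℚ) : ℝ))) i := cast_mulVec P _ i
    simp only [hXSdef, Pi.add_apply]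
    push_cast
    rw [this]
  have hXSnear : ∀ S, ‖(fun j => ((XS S j : ℚ) : ℝ)) - x‖ < ε := by
    intro S
    rw [pi_norm_lt_iff hε]
    intro i
    set w : Fin n → ℝ := (fun j => ((q j (S j) : ℚ) : ℝ)) - u with hwdef
    have hw : ∀ j, |w j| ≤ δ := fun j => hqnear j (S j)
    have hdiff : ((XS S i : ℚ) : ℝ) - x i = (P'.mulVec w) i := by
      rw [hXScast S i, hxu i, hwdef, Matrix.mulVec_sub, hPu]
      simp
    rw [Real.norm_eq_abs, Pi.sub_apply, hdiff]
    have h1 : |(P'.mulVec w) i| ≤ ∑ j, |P' i j| * δ := by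
      have : (P'.mulVec w) i = ∑ j, P' i j * w j := by
        simp [Matrix.mulVec, dotProduct]
      rw [this]
      refine (Finset.abs_sum_le_sum_abs _ _).trans (Finset.sum_le_sum fun j _ => ?_)
      rw [abs_mul]
      exact mul_le_mul_of_nonneg_left (hw j) (abs_nonneg _)
    have h2 : (∑ j, |P' i j| * δ) = (∑ j, |P' i j|) * δ := (Finset.sum_mul _ _ _).symm
    have h3 : (∑ j, |P' i j|) * δ ≤ (C - 1) * δ :=
      mul_le_mul_of_nonneg_right (hrow i) hδ.le
    have h4 : (C - 1) * δ < C * δ := by nlinarith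
    rw [h2] at h1
    calc |(P'.mulVec w) i| ≤ (∑ j, |P' i j|) * δ := h1
      _ ≤ (C - 1) * δ := h3
      _ < C * δ := h4
      _ = ε := hCδ
  have hXSdecomp : ∀ i, x i = ∑ S : Fin n → Bool, Γ S * ((XS S i : ℚ) : ℝ) := by
    intro i
    have expand : ∀ S : Fin n → Bool, Γ S * ((XS S i : ℚ) : ℝ)
        = Γ S * (x₀ i : ℝ) + ∑ j, P' i j * (Γ S * ((q j (S j) : ℚ) : ℝ)) := by
      intro S
      rw [hXScast S i]
      have : (P'.mulVec (fun j => ((q j (S j) : ℚ) : ℝ))) i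
          = ∑ j, P' i j * ((q j (S j) : ℚ) : ℝ) := by
        simp [Matrix.mulVec, dotProduct]
      rw [this, mul_add, Finset.mul_sum]
      congr 1
      exact Finset.sum_congr rfl fun j _ => by ring
    calc x i = (x₀ i : ℝ) + u i := hxu i
      _ = (x₀ i : ℝ) + (P'.mulVec u) i := by rw [hPu]
      _ = (x₀ i : ℝ) + ∑ j, P' i j * u j := by
            simp [Matrix.mulVec, dotProduct]
      _ = (∑ S : Fin n → Bool, Γ S) * (x₀ i : ℝ)
            + ∑ j, P' i j * (∑ S : Fin n → Bool, Γ S * ((q j (S j) : ℚ) : ℝ)) := by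
            rw [hΓsum, one_mul]
            congr 1
            exact Finset.sum_congr rfl fun j _ => by rw [hΓq j]
      _ = ∑ S : Fin n → Bool, Γ S * ((XS S i : ℚ) : ℝ) := by
            rw [Finset.sum_congr rfl fun S _ => expand S, Finset.sum_add_distrib,
              ← Finset.sum_mul]
            congr 1
            rw [Finset.sum_comm]
            exact Finset.sum_congr rfl fun j _ => by rw [Finset.mul_sum]
  -- transport to Fin (2^n)
  have hcard : Fintype.card (Fin n → Bool) = 2 ^ n := by simp [Fintype.card_fun]
  set e : (Fin n → Bool) ≃ Fin (2 ^ n) := Fintype.equivFinOfCardEq hcard with hedef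
  refine ⟨2 ^ n, pow_pos (by norm_num : (0:ℕ) < 2) n, fun t => XS (e.symm t),
    fun t => Γ (e.symm t), fun t => hXSsol _, fun t => hXSnear _, fun t => hΓpos _, ?_, ?_⟩
  · rw [Equiv.sum_comp e.symm Γ]; exact hΓsum
  · intro j
    rw [Equiv.sum_comp e.symm (fun S => Γ S * ((XS S j : ℚ) : ℝ))]
    exact hXSdecomp j
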